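/- arXiv:2206.04815 — 4 statements merged into one kernel-verified Lean document; each statement's English description precedes it below -/
import Mathlib

section
/- Let G = ([n], E) be a directed graph and S_G ≤ M(n, F) its graphical matrix space. Then G is acyclic if and only if every matrix in S_G is nilpotent. -/
/-!
If `G` is acyclic, every walk has at most `n - 1` arcs, and an entry of `B ^ m` with `B ∈ S_G`
is a sum over walks of length `m`, so `B ^ n = 0`. Conversely, the sum `B` of the elementary
matrices along a cycle fixes the indicator vector of the cycle's vertices, so no power of `B`
vanishes.
-/

open Matrix

/-- The graphical matrix space of a directed graph with arc set `E ⊆ [n] × [n]`. -/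
def graphSpace (F : Type*) [Field F] {n : ℕ} (E : Finset (Fin n × Fin n)) :
    Submodule F (Matrix (Fin n) (Fin n) F) :=
  Submodule.span F ((fun e => Matrix.single e.1 e.2 (1 : F)) '' (E : Set (Fin n × Fin n)))

/-- A directed graph has a cycle: a closed walk of positive length whose
vertices `v 0, …, v (k-1)` are pairwise distinct. -/
def HasCycle {n : ℕ} (E : Finset (Fin n × Fin n)) : Prop :=
  ∃ (k : ℕ) (v : ℕ → Fin n), 0 < k ∧ v k = v 0 ∧
    (∀ i < k, (v i, v (i + 1)) ∈ E) ∧ (∀ i < k, ∀ j < k, v i = v j → i = j)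

lemma Matrix.not_isNilpotent_of_mulVec_eq_self {R ι : Type*} [Semiring R] [Fintype ι]
    [DecidableEq ι] {B : Matrix ι ι R} {w : ι → R} (hw : w ≠ 0) (hBw : B *ᵥ w = w) :
    ¬ IsNilpotent B := by
  rintro ⟨m, hm⟩
  have hpow : ∀ m : ℕ, (B ^ m) *ᵥ w = w := by
    intro m
    induction m with
    | zero => simp
    | succ m ih => rw [pow_succ, ← mulVec_mulVec, hBw, ih]
  exact hw (by rw [← hpow m, hm, zero_mulVec])

section Walks

variable {n : ℕ} {E : Finset (Fin n × Fin n)}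

def IsWalk (E : Finset (Fin n × Fin n)) (v : ℕ → Fin n) (k : ℕ) : Prop :=
  ∀ t < k, (v t, v (t + 1)) ∈ E

lemma IsWalk.shift {v : ℕ → Fin n} {k : ℕ} (hv : IsWalk E v k) {i l : ℕ}
    (hl : i + l ≤ k) : IsWalk E (fun t => v (i + t)) l := fun t ht => hv (i + t) (by omega)

lemma IsWalk.snoc {v : ℕ → Fin n} {k : ℕ} (hv : IsWalk E v k) {j : Fin n}
    (hj : (v k, j) ∈ E) : IsWalk E (Function.update v (k + 1) j) (k + 1) := by
  intro t ht
  rw [Function.update_of_ne (by omega)]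
  rcases Nat.lt_succ_iff_lt_or_eq.mp ht with ht | rfl
  · rw [Function.update_of_ne (by omega)]
    exact hv t ht
  · rwa [Function.update_self]

/-- A closed subwalk of minimal length has pairwise distinct vertices. -/
lemma hasCycle_of_isWalk_of_apply_eq {v : ℕ → Fin n} {k : ℕ} (hv : IsWalk E v k)
    {i j : ℕ} (hij : i < j) (hjk : j ≤ k) (hvij : v i = v j) : HasCycle E := by
  induction hgap : j - i using Nat.strong_induction_on generalizing i j with
  | _ gap ih =>
    by_cases hinj : ∀ a < gap, ∀ b < gap, v (i + a) = v (i + b) → a = b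
    · refine ⟨gap, fun t => v (i + t), by omega, ?_, hv.shift (by omega), hinj⟩
      change v (i + gap) = v (i + 0)
      rw [← hgap, Nat.add_sub_cancel' hij.le, add_zero, hvij]
    · push Not at hinj
      obtain ⟨a, ha, b, hb, hvab, hab⟩ := hinj
      rcases hab.lt_or_gt with hab | hab
      · exact ih (b - a) (by omega) (by omega) (by omega) hvab (by omega)
      · exact ih (a - b) (by omega) (by omega) (by omega) hvab.symm (by omega)

/-- A walk with `n` arcs visits `n + 1` vertices of `Fin n`, so it repeats one. -/
lemma hasCycle_of_isWalk {v : ℕ → Fin n} (hv : IsWalk E v n) : HasCycle E := by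
  obtain ⟨a, b, hab, hvab⟩ :=
    Fintype.exists_ne_map_eq_of_card_lt (fun t : Fin (n + 1) => v t) (by simp)
  have hab' : (a : ℕ) ≠ b := Fin.val_ne_of_ne hab
  rcases hab'.lt_or_gt with h | h
  · exact hasCycle_of_isWalk_of_apply_eq hv h (by omega) hvab
  · exact hasCycle_of_isWalk_of_apply_eq hv h (by omega) hvab.symm

end Walks

section Nilpotent

variable {R : Type*} [Semiring R] {n : ℕ} {E : Finset (Fin n × Fin n)}
  {B : Matrix (Fin n) (Fin n) R}

lemma exists_isWalk_of_pow_apply_ne_zero (hB : ∀ i j, (i, j) ∉ E → B i j = 0) (m : ℕ)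
    {i j : Fin n} (hij : (B ^ m) i j ≠ 0) :
    ∃ v : ℕ → Fin n, v 0 = i ∧ v m = j ∧ IsWalk E v m := by
  induction m generalizing j with
  | zero =>
    refine ⟨fun _ => i, rfl, ?_, fun t ht => absurd ht t.not_lt_zero⟩
    by_contra h
    exact hij (by simp [one_apply_ne h])
  | succ m ih =>
    rw [pow_succ, mul_apply] at hij
    obtain ⟨l, -, hl⟩ := Finset.exists_ne_zero_of_sum_ne_zero hij
    obtain ⟨v, hv0, hvm, hv⟩ := ih (left_ne_zero_of_mul hl)
    refine ⟨Function.update v (m + 1) j, ?_, Function.update_self .., hv.snoc ?_⟩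
    · rwa [Function.update_of_ne (by omega)]
    · by_contra h
      exact right_ne_zero_of_mul hl (hB l j (hvm ▸ h))

lemma pow_eq_zero_of_not_hasCycle (hE : ¬ HasCycle E) (hB : ∀ i j, (i, j) ∉ E → B i j = 0) :
    B ^ n = 0 := by
  ext i j
  by_contra hij
  obtain ⟨v, -, -, hv⟩ := exists_isWalk_of_pow_apply_ne_zero hB n hij
  exact hE (hasCycle_of_isWalk hv)

end Nilpotent

section GraphSpace

variable {F : Type*} [Field F] {n : ℕ} {E : Finset (Fin n × Fin n)}

lemma apply_eq_zero_of_mem_graphSpace {B : Matrix (Fin n) (Fin n) F} (hB : B ∈ graphSpace F E)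
    {i j : Fin n} (hij : (i, j) ∉ E) : B i j = 0 := by
  induction hB using Submodule.span_induction with
  | mem x hx =>
    obtain ⟨e, he, rfl⟩ := hx
    simp only [single_apply, ite_eq_right_iff, and_imp]
    rintro rfl rfl
    exact absurd he hij
  | zero => rfl
  | add x y _ _ hx hy => simp [hx, hy]
  | smul a x _ hx => simp [hx]

lemma sum_single_mem_graphSpace {v : ℕ → Fin n} {k : ℕ} (hv : IsWalk E v k) :
    ∑ t ∈ Finset.range k, single (v t) (v (t + 1)) (1 : F) ∈ graphSpace F E :=
  Submodule.sum_mem _ fun t ht =>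
    Submodule.subset_span ⟨(v t, v (t + 1)), hv t (Finset.mem_range.mp ht), rfl⟩

end GraphSpace

section Cycle

variable {R : Type*} [Semiring R] {n : ℕ} {v : ℕ → Fin n} {k : ℕ}

lemma sum_pi_single_apply_eq_one (hinj : ∀ i < k, ∀ j < k, v i = v j → i = j) {s : ℕ}
    (hs : s < k) : (∑ t ∈ Finset.range k, (Pi.single (v t) 1 : Fin n → R)) (v s) = 1 := by
  rw [Finset.sum_apply, Finset.sum_eq_single_of_mem s (Finset.mem_range.mpr hs)]
  · exact Pi.single_eq_same _ _
  · intro t ht hts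
    exact Pi.single_eq_of_ne (fun h => hts (hinj s hs t (Finset.mem_range.mp ht) h).symm) _

lemma sum_single_mulVec_sum_pi_single (hk : v k = v 0)
    (hinj : ∀ i < k, ∀ j < k, v i = v j → i = j) :
    (∑ t ∈ Finset.range k, single (v t) (v (t + 1)) (1 : R)) *ᵥ
        ∑ t ∈ Finset.range k, (Pi.single (v t) 1 : Fin n → R) =
      ∑ t ∈ Finset.range k, Pi.single (v t) 1 := by
  rw [sum_mulVec]
  refine Finset.sum_congr rfl fun t ht => ?_
  have ht := Finset.mem_range.mp ht
  have hnext : (∑ s ∈ Finset.range k, (Pi.single (v s) 1 : Fin n → R)) (v (t + 1)) = 1 := by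
    rcases (show t + 1 < k ∨ t + 1 = k by omega) with h | h
    · exact sum_pi_single_apply_eq_one hinj h
    · rw [h, hk]
      exact sum_pi_single_apply_eq_one hinj (by omega)
  rw [single_mulVec_eq, hnext, one_mul, one_smul]

end Cycle

/-- `G` is acyclic iff every matrix in `S_G` is nilpotent. -/
theorem stmt_3 (F : Type*) [Field F] (n : ℕ) (E : Finset (Fin n × Fin n)) :
    ¬ HasCycle E ↔ ∀ B ∈ graphSpace F E, IsNilpotent B := by
  constructor
  · intro hE B hB
    exact ⟨n, pow_eq_zero_of_not_hasCycle hE fun _ _ => apply_eq_zero_of_mem_graphSpace hB⟩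
  · rintro hnil ⟨k, v, hk, hclosed, hv, hinj⟩
    have hw : ∑ t ∈ Finset.range k, (Pi.single (v t) 1 : Fin n → F) ≠ 0 := fun h =>
      zero_ne_one (h ▸ sum_pi_single_apply_eq_one hinj hk)
    exact not_isNilpotent_of_mulVec_eq_self hw (sum_single_mulVec_sum_pi_single hclosed hinj)
      (hnil _ (sum_single_mem_graphSpace hv))
end

section
/- Let G = ([n], E) be a directed graph, S_G ≤ M(n, F) its graphical matrix space, and r ∈ {0, 1, …, n}. Then every collection of pairwise vertex-disjoint directed cycles in G covers at most n − r vertices if and only if every matrix B ∈ S_G has the property that x^r divides the characteristic polynomial of B (i.e., B has at least r zero eigenvalues counted with algebraic multiplicity). -/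
/-!
Expand `det (X - B)` over permutations `σ`. The term of `σ` vanishes unless `B i (σ i) ≠ 0`
whenever `σ i ≠ i`; then, leaving out the fixed points with `B i i = 0`, the remaining vertices
are covered by the cycles of `σ`, all of which lie in `G` (fixed points with `B i i ≠ 0` being
self-loops). So at least `r` such fixed points exist, each contributing a factor `X`.
Conversely, the matrix of the arcs of a cycle cover of `V` is a permutation matrix on `V` and
zero elsewhere, so its characteristic polynomial is `X ^ (n - #V)` times a polynomial with
nonzero constant term.
-/

open Matrix Polynomial

open Finset

section Charpoly

variable {F ι : Type*} [Field F] [Fintype ι] [DecidableEq ι]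

lemma charpoly_eq_sum_prod_charmatrix (B : Matrix ι ι F) :
    B.charpoly = ∑ σ : Equiv.Perm ι, Equiv.Perm.sign σ • ∏ i, charmatrix B i (σ i) := by
  rw [charpoly, ← det_transpose, det_apply]
  rfl

lemma X_pow_card_dvd_prod_charmatrix {B : Matrix ι ι F} {σ : Equiv.Perm ι} {s : Finset ι}
    (hs : ∀ i ∈ s, σ i = i ∧ B i i = 0) : X ^ #s ∣ ∏ i, charmatrix B i (σ i) := by
  rw [← prod_mul_prod_compl s]
  refine Dvd.dvd.mul_right (dvd_of_eq ?_) _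
  rw [prod_congr rfl fun i hi => ?_, prod_const]
  obtain ⟨hσi, hBi⟩ := hs i hi
  rw [hσi, charmatrix_apply_eq, hBi, map_zero, sub_zero]

lemma apply_ne_zero_of_prod_charmatrix_ne_zero {B : Matrix ι ι F} {σ : Equiv.Perm ι}
    (h : ∏ i, charmatrix B i (σ i) ≠ 0) {i : ι} (hi : σ i ≠ i) : B i (σ i) ≠ 0 := by
  have := prod_ne_zero_iff.mp h i (mem_univ i)
  rwa [charmatrix_apply_ne _ _ _ (Ne.symm hi), neg_ne_zero, C_ne_zero] at this

lemma charpoly_eq_charpoly_submatrix_mul_X_pow {B : Matrix ι ι F} (V : Finset ι)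
    (hB : ∀ i j, B i j ≠ 0 → i ∈ V ∧ j ∈ V) :
    B.charpoly = (B.submatrix ((↑) : V → ι) (↑)).charpoly * X ^ (Fintype.card ι - #V) := by
  let e := Equiv.sumCompl (· ∈ V)
  have hblocks : B.reindex e.symm e.symm = fromBlocks (B.submatrix (↑) (↑)) 0 0 0 := by
    ext (i | i) (j | j)
    · rfl
    all_goals
      show B _ _ = 0
      by_contra hne
      obtain ⟨hi, hj⟩ := hB _ _ hne
      first | exact i.2 hi | exact j.2 hj
  rw [← charpoly_reindex e.symm, hblocks, charpoly_fromBlocks_zero₂₁, charpoly_zero,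
    Fintype.card_subtype_compl, Fintype.card_coe]

lemma not_X_dvd_charpoly_of_det_ne_zero {M : Matrix ι ι F} (h : M.det ≠ 0) :
    ¬ X ∣ M.charpoly := by
  rw [X_dvd_iff]
  intro h0
  rw [det_eq_sign_charpoly_coeff, h0, mul_zero] at h
  exact h rfl

end Charpoly

section CycleCover

variable {F ι : Type*} [Field F] [Fintype ι] [DecidableEq ι]

variable (F) in
def cycleCoverMatrix (V : Finset ι) (σ : Equiv.Perm ι) : Matrix ι ι F :=
  of fun i j => if i ∈ V ∧ σ i = j then 1 else 0

variable {V : Finset ι} {σ : Equiv.Perm ι}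

lemma submatrix_cycleCoverMatrix (hσ : σ.support ⊆ V) :
    (cycleCoverMatrix F V σ).submatrix ((↑) : V → ι) (↑) =
      (σ.subtypePerm_of_support_le hσ).permMatrix F := by
  ext i j
  simp [cycleCoverMatrix, Equiv.Perm.subtypePerm_of_support_le, PEquiv.toMatrix_apply,
    Subtype.ext_iff]

lemma not_X_pow_dvd_charpoly_cycleCoverMatrix (hσ : ∀ i ∉ V, σ i = i) {k : ℕ}
    (hk : Fintype.card ι - #V < k) : ¬ X ^ k ∣ (cycleCoverMatrix F V σ).charpoly := by
  have hsupp : σ.support ⊆ V := fun i hi => by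
    by_contra hiV
    exact Equiv.Perm.mem_support.mp hi (hσ i hiV)
  have hentries : ∀ i j, cycleCoverMatrix F V σ i j ≠ 0 → i ∈ V ∧ j ∈ V := by
    intro i j hij
    obtain ⟨⟨hi, rfl⟩, -⟩ := ite_ne_right_iff.mp hij
    exact ⟨hi, (Equiv.Perm.isInvariant_of_support_le hsupp i).mpr hi⟩
  have hdet : ((σ.subtypePerm_of_support_le hsupp).permMatrix F).det ≠ 0 := by
    rw [det_permutation]
    exact (Equiv.Perm.sign _).isUnit.map (Int.castRingHom F) |>.ne_zero
  rw [charpoly_eq_charpoly_submatrix_mul_X_pow V hentries, submatrix_cycleCoverMatrix hsupp,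
    mul_comm]
  intro hdvd
  refine not_X_dvd_charpoly_of_det_ne_zero hdet
    ((mul_dvd_mul_iff_left (pow_ne_zero (Fintype.card ι - #V) X_ne_zero)).mp ?_)
  rw [← pow_succ]
  exact (pow_dvd_pow X hk).trans hdvd

end CycleCover

section GraphSpace

variable {F : Type*} [Field F] {n : ℕ} {E : Finset (Fin n × Fin n)}

lemma mem_graphSpace_iff {B : Matrix (Fin n) (Fin n) F} :
    B ∈ graphSpace F E ↔ ∀ i j, (i, j) ∉ E → B i j = 0 := by
  constructor
  · intro hB i j hij
    induction hB using Submodule.span_induction with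
    | mem x hx =>
      obtain ⟨e, he, rfl⟩ := hx
      apply Matrix.single_apply_of_ne
      rintro ⟨rfl, rfl⟩
      exact hij he
    | zero => rfl
    | add x y _ _ hx hy => simp [hx, hy]
    | smul a x _ hx => simp [hx]
  · intro hB
    rw [matrix_eq_sum_single B]
    refine Submodule.sum_mem _ fun i _ => Submodule.sum_mem _ fun j _ => ?_
    by_cases hij : (i, j) ∈ E
    · rw [← mul_one (B i j), ← smul_eq_mul, ← smul_single]
      exact Submodule.smul_mem _ _ (Submodule.subset_span ⟨(i, j), hij, rfl⟩)
    · simp [hB i j hij]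

lemma cycleCoverMatrix_mem_graphSpace {V : Finset (Fin n)} {σ : Equiv.Perm (Fin n)}
    (harc : ∀ i ∈ V, (i, σ i) ∈ E) : cycleCoverMatrix F V σ ∈ graphSpace F E := by
  refine mem_graphSpace_iff.mpr fun i j hij => if_neg ?_
  rintro ⟨hi, rfl⟩
  exact hij (harc i hi)

theorem X_pow_dvd_charpoly_of_cycle_cover_card_le {r : ℕ} (hr : r ≤ n)
    (hcov : ∀ (V : Finset (Fin n)) (σ : Equiv.Perm (Fin n)),
        (∀ i ∉ V, σ i = i) → (∀ i ∈ V, (i, σ i) ∈ E) → V.card ≤ n - r)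
    {B : Matrix (Fin n) (Fin n) F} (hB : B ∈ graphSpace F E) : X ^ r ∣ B.charpoly := by
  classical
  rw [charpoly_eq_sum_prod_charmatrix]
  refine dvd_sum fun σ _ => dvd_smul_of_dvd _ ?_
  by_cases hprod : ∏ i, charmatrix B i (σ i) = 0
  · simp [hprod]
  let Z : Finset (Fin n) := {i | σ i = i ∧ B i i = 0}
  have hentry : ∀ i ∈ Zᶜ, B i (σ i) ≠ 0 := by
    intro i hi
    by_cases hσi : σ i = i
    · simpa [Z, hσi] using hi
    · exact apply_ne_zero_of_prod_charmatrix_ne_zero hprod hσi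
  have hcard : #Zᶜ ≤ n - r := by
    refine hcov Zᶜ σ (fun i hi => ?_) (fun i hi => ?_)
    · exact (mem_filter.mp (notMem_compl.mp hi)).2.1
    · by_contra hE
      exact hentry i hi (mem_graphSpace_iff.mp hB i (σ i) hE)
  have hZ : r ≤ #Z := by
    have := card_add_card_compl Z
    rw [Fintype.card_fin] at this
    omega
  exact (pow_dvd_pow X hZ).trans (X_pow_card_dvd_prod_charmatrix fun i hi => (mem_filter.mp hi).2)

end GraphSpace

/-- A collection of vertex-disjoint cycles covering a vertex set `V` is encoded by a
permutation `σ` of `[n]` fixing the complement of `V` pointwise, all of whose arcs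
within `V` belong to `E` (self-loops being cycles of length 1). -/
theorem stmt_5 (F : Type*) [Field F] (n : ℕ) (E : Finset (Fin n × Fin n))
    (r : ℕ) (hr : r ≤ n) :
    (∀ (V : Finset (Fin n)) (σ : Equiv.Perm (Fin n)),
        (∀ i ∉ V, σ i = i) → (∀ i ∈ V, (i, σ i) ∈ E) → V.card ≤ n - r) ↔
      (∀ B ∈ graphSpace F E, (X : F[X]) ^ r ∣ B.charpoly) := by
  refine ⟨fun hcov B hB => X_pow_dvd_charpoly_of_cycle_cover_card_le hr hcov hB, ?_⟩
  intro hdvd V σ hfix harc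
  by_contra! hcard
  refine not_X_pow_dvd_charpoly_cycleCoverMatrix hfix ?_
    (hdvd _ (cycleCoverMatrix_mem_graphSpace harc))
  have hV := V.card_le_univ
  rw [Fintype.card_fin] at hV ⊢
  omega
end

section
/- Let G = ([n], E) be a directed graph and S_G ≤ M(n, F) its graphical matrix space. Then G is strongly connected if and only if S_G is irreducible (has no invariant subspace other than 0 and F^n). -/
/-!
A subspace `U` is invariant under `S_G` exactly when `u ∈ U` forces `u a • e_b ∈ U` for every
arc `a → b`. If `G` is strongly connected and `U ≠ 0`, the set of `j` with `e_j ∈ U` is then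
nonempty and closed under arcs, hence all of `[n]`. Conversely, a nonempty proper vertex set `S`
with no arc leaving it makes the coordinate subspace `F^S` a nontrivial invariant subspace.
-/

open Matrix

/-- A directed graph is strongly connected if from every nonempty proper vertex subset
there is an arc leaving it. -/
def StronglyConnected {n : ℕ} (E : Finset (Fin n × Fin n)) : Prop :=
  ∀ S : Finset (Fin n), S.Nonempty → S ≠ Finset.univ →
    ∃ i ∈ S, ∃ j, j ∉ S ∧ (i, j) ∈ E

namespace Matrix

variable {m R : Type*} [Fintype m]

theorem vecMul_single_one [DecidableEq m] [NonAssocSemiring R] (u : m → R) (i j : m) :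
    u ᵥ* single i j (1 : R) = Pi.single j (u i) := by
  ext k
  simp [vecMul, dotProduct, single_apply, Pi.single_apply, ite_and, eq_comm]

theorem vecMul_mem_of_mem_span [CommSemiring R] {s : Set (Matrix m m R)}
    {U : Submodule R (m → R)} (hs : ∀ B ∈ s, ∀ u ∈ U, u ᵥ* B ∈ U) :
    ∀ B ∈ Submodule.span R s, ∀ u ∈ U, u ᵥ* B ∈ U := by
  intro B hB
  induction hB using Submodule.span_induction with
  | mem B hB => exact hs B hB
  | zero => intro u _; simp
  | add B C _ _ hB hC => intro u hu; simpa [vecMul_add] using U.add_mem (hB u hu) (hC u hu)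
  | smul c B _ hB => intro u hu; simpa [vecMul_smul] using U.smul_mem c (hB u hu)

end Matrix

theorem StronglyConnected.eq_univ_of_closed {n : ℕ} {E : Finset (Fin n × Fin n)}
    (hE : StronglyConnected E) {S : Finset (Fin n)} (hS : S.Nonempty)
    (hclosed : ∀ a ∈ S, ∀ b, (a, b) ∈ E → b ∈ S) : S = Finset.univ := by
  by_contra hne
  obtain ⟨a, ha, b, hb, hab⟩ := hE S hS hne
  exact hb (hclosed a ha b hab)

theorem invariant_graphSpace_iff (F : Type*) [Field F] {n : ℕ} (E : Finset (Fin n × Fin n))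
    (U : Submodule F (Fin n → F)) :
    (∀ B ∈ graphSpace F E, ∀ u ∈ U, u ᵥ* B ∈ U) ↔
      ∀ a b, (a, b) ∈ E → ∀ u ∈ U, Pi.single b (u a) ∈ U := by
  constructor
  · intro hU a b hab u hu
    rw [← vecMul_single_one]
    exact hU _ (Submodule.subset_span ⟨(a, b), hab, rfl⟩) u hu
  · rintro hU B hB
    refine vecMul_mem_of_mem_span ?_ B hB
    rintro _ ⟨⟨a, b⟩, hab, rfl⟩ u hu
    rw [vecMul_single_one]
    exact hU a b hab u hu

def coordSubspace (R : Type*) [Semiring R] {ι : Type*} (S : Finset ι) : Submodule R (ι → R) :=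
  Submodule.pi (↑S)ᶜ fun _ => ⊥

theorem single_mem_coordSubspace_iff {R ι : Type*} [Semiring R] [DecidableEq ι] {S : Finset ι}
    (j : ι) (x : R) : Pi.single j x ∈ coordSubspace R S ↔ j ∈ S ∨ x = 0 := by
  simp only [coordSubspace, Submodule.mem_pi, Set.mem_compl_iff, Finset.mem_coe,
    Submodule.mem_bot]
  constructor
  · intro h
    by_contra! hjx
    simpa [hjx.2] using h j hjx.1
  · rintro (hj | rfl) k hk
    · simp [show k ≠ j by rintro rfl; exact hk hj]
    · simp

theorem eq_top_of_forall_single_one_mem {R ι : Type*} [Semiring R] [Finite ι] [DecidableEq ι]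
    {U : Submodule R (ι → R)} (h : ∀ j, Pi.single j 1 ∈ U) : U = ⊤ := by
  rw [eq_top_iff, ← (Pi.basisFun R ι).span_eq, Submodule.span_le]
  rintro _ ⟨j, rfl⟩
  simpa using h j

theorem single_one_mem_of_arc {F : Type*} [Field F] {n : ℕ} {E : Finset (Fin n × Fin n)}
    {U : Submodule F (Fin n → F)} (hU : ∀ a b, (a, b) ∈ E → ∀ u ∈ U, Pi.single b (u a) ∈ U)
    {a b : Fin n} (hab : (a, b) ∈ E) {u : Fin n → F} (hu : u ∈ U) (ha : u a ≠ 0) :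
    Pi.single b 1 ∈ U := by
  simpa [ha] using hU a b hab _ (U.smul_mem (u a)⁻¹ hu)

theorem StronglyConnected.eq_bot_or_eq_top {F : Type*} [Field F] {n : ℕ}
    {E : Finset (Fin n × Fin n)} (hE : StronglyConnected E) {U : Submodule F (Fin n → F)}
    (hU : ∀ a b, (a, b) ∈ E → ∀ u ∈ U, Pi.single b (u a) ∈ U) : U = ⊥ ∨ U = ⊤ := by
  classical
  refine or_iff_not_imp_left.2 fun hbot => eq_top_of_forall_single_one_mem fun j => ?_
  obtain ⟨w, hw, hw0⟩ := U.ne_bot_iff.1 hbot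
  obtain ⟨i, hi⟩ := Function.ne_iff.1 hw0
  set T := Finset.univ.filter fun j => Pi.single j (1 : F) ∈ U
  have hT : T.Nonempty := by
    by_cases hout : ∃ b, (i, b) ∈ E
    · obtain ⟨b, hib⟩ := hout
      exact ⟨b, by simpa [T] using single_one_mem_of_arc hU hib hw hi⟩
    -- Without an arc out of `i`, the closed set `{i}` is everything, so `w` is a multiple of `eᵢ`.
    have hall : ∀ k, k = i := by
      have hclosed : ∀ a ∈ ({i} : Finset (Fin n)), ∀ b, (a, b) ∈ E → b ∈ ({i} : Finset _) := by
        rintro a ha b hab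
        rw [Finset.mem_singleton.1 ha] at hab
        exact absurd ⟨b, hab⟩ hout
      simpa [Finset.eq_univ_iff_forall] using
        hE.eq_univ_of_closed (Finset.singleton_nonempty i) hclosed
    have hwi : w = Pi.single i (w i) := funext fun k => by obtain rfl := hall k; simp
    rw [hwi] at hw
    exact ⟨i, by simpa [T, inv_mul_cancel₀ hi, ← Pi.single_smul'] using U.smul_mem (w i)⁻¹ hw⟩
  have hTuniv : T = Finset.univ := hE.eq_univ_of_closed hT fun a ha b hab => by
    simp only [T, Finset.mem_filter_univ] at ha ⊢
    exact single_one_mem_of_arc hU hab ha (by simp)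
  have hj : j ∈ T := hTuniv ▸ Finset.mem_univ j
  simpa [T] using hj

theorem coordSubspace_invariant {F : Type*} [Field F] {n : ℕ} {E : Finset (Fin n × Fin n)}
    {S : Finset (Fin n)} (hS : ∀ a ∈ S, ∀ b, (a, b) ∈ E → b ∈ S) :
    ∀ a b, (a, b) ∈ E → ∀ u ∈ coordSubspace F S, Pi.single b (u a) ∈ coordSubspace F S := by
  intro a b hab u hu
  rw [single_mem_coordSubspace_iff]
  by_cases ha : a ∈ S
  · exact Or.inl (hS a ha b hab)
  · exact Or.inr (by simpa [coordSubspace, Submodule.mem_pi] using hu a ha)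

/-- `G` is strongly connected iff `S_G` is irreducible: the only subspaces of `F^n`
(row vectors, acted on from the right) invariant under every matrix of `S_G` are `0`
and `F^n`. -/
theorem stmt_11 (F : Type*) [Field F] (n : ℕ) (E : Finset (Fin n × Fin n)) :
    StronglyConnected E ↔
      ∀ U : Submodule F (Fin n → F),
        (∀ B ∈ graphSpace F E, ∀ u ∈ U, Matrix.vecMul u B ∈ U) →
          U = ⊥ ∨ U = ⊤ := by
  simp only [invariant_graphSpace_iff]
  refine ⟨fun hE U hU => hE.eq_bot_or_eq_top hU, fun hirr S hS hSuniv => ?_⟩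
  by_contra! hclosed
  rcases hirr (coordSubspace F S) (coordSubspace_invariant fun a ha b hab => by
      by_contra hb; exact hclosed a ha b hb hab) with hbot | htop
  · obtain ⟨i, hi⟩ := hS
    have hmem := (single_mem_coordSubspace_iff i (1 : F)).2 (Or.inl hi)
    simp [hbot] at hmem
  · obtain ⟨j, -, hj⟩ := Finset.exists_of_ssubset (Finset.ssubset_univ_iff.2 hSuniv)
    have hmem := (single_mem_coordSubspace_iff j (1 : F)).1 (htop ▸ Submodule.mem_top)
    simp [hj] at hmem
end

section
/- Let G = ([n], E) and H = ([n], F) be directed graphs with graphical matrix spaces S_G, S_H ≤ M(n, F). If S_G and S_H are conjugate, i.e., there exists T ∈ GL(n, F) with T S_G T^{-1} = S_H, then G and H are isomorphic directed graphs. -/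
/-!
Call `i'` a dominator of `i` if every in- and out-neighbour of `i` is also one of `i'`, and
call `i`, `i'` twins if each dominates the other; twins have the same arcs. Since
`(T E_{ij} T⁻¹)_{kl} = T_{ki} (T⁻¹)_{jl}`, arcs transfer between vertices `i` of `G` and `k` of `H`
that are coupled, `T_{ki} ≠ 0 ≠ (T⁻¹)_{ik}`, and every vertex has a partner because
`(T⁻¹ T)_{ii} = 1`. Couplings preserve domination, and the blocks of `T⁻¹` and `T` between the
dominator sets of coupled vertices multiply to the identity, so these sets have equal size.
Removing the strict dominators, a union of twin classes, and inducting on that size shows that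
coupled vertices have twin classes of equal size. A coupling need not contain a permutation
(already for `n = 3` over `𝔽₂`), but gluing bijections between matched twin classes gives the
isomorphism.
-/

open Matrix

theorem Quotient.exists_equiv_mk_eq {α β : Type*} [Finite α] [Finite β] {s₁ : Setoid α}
    {s₂ : Setoid β} (θ : Quotient s₁ ≃ Quotient s₂)
    (hcard : ∀ x : α, Nat.card {x' // (⟦x'⟧ : Quotient s₁) = ⟦x⟧} =
      Nat.card {y // (⟦y⟧ : Quotient s₂) = θ ⟦x⟧}) :
    ∃ σ : α ≃ β, ∀ x, (⟦σ x⟧ : Quotient s₂) = θ ⟦x⟧ := by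
  have fiber : ∀ c, Nonempty ({x // θ ⟦x⟧ = c} ≃ {y // (⟦y⟧ : Quotient s₂) = c}) := by
    intro c
    obtain ⟨x, rfl⟩ : ∃ x, θ ⟦x⟧ = c :=
      (Quotient.exists_rep (θ.symm c)).imp fun x hx => by rw [hx, θ.apply_symm_apply]
    rw [← Finite.card_eq, ← hcard x]
    exact Nat.card_congr (Equiv.subtypeEquivRight fun _ => θ.apply_eq_iff_eq)
  exact ⟨Equiv.ofFiberEquiv fun c => (fiber c).some, Equiv.ofFiberEquiv_map _⟩

open Finset

theorem Matrix.card_le_card_of_mul_eq_one {m n R : Type*} [Fintype m] [Fintype n]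
    [DecidableEq m] [CommRing R] [Nontrivial R] {A : Matrix n m R} {B : Matrix m n R}
    (hBA : B * A = 1) {U : Finset m} {W : Finset n}
    (hUW : ∀ x ∈ U, ∀ x' ∈ U, ∀ y, B x y ≠ 0 → A y x' ≠ 0 → y ∈ W) : #U ≤ #W := by
  let P : Matrix U W R := B.submatrix (↑) (↑)
  let Q : Matrix W U R := A.submatrix (↑) (↑)
  have hPQ : P * Q = 1 := by
    ext x x'
    have hsum : ∑ y ∈ W, B x y * A y x' = ∑ y, B x y * A y x' := by
      refine sum_subset (subset_univ W) fun y _ hy => ?_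
      by_contra hne
      exact hy (hUW x x.2 x' x'.2 y (left_ne_zero_of_mul hne) (right_ne_zero_of_mul hne))
    change ∑ y : W, B x y * A y x' = _
    rw [sum_coe_sort W (fun y => B x y * A y x'), hsum, ← mul_apply, hBA]
    simp only [one_apply]
    exact if_congr Subtype.ext_iff.symm rfl rfl
  calc #U = Fintype.card U := (Fintype.card_coe U).symm
    _ = (1 : Matrix U U R).rank := rank_one.symm
    _ ≤ Q.rank := hPQ ▸ rank_mul_le_right P Q
    _ ≤ Fintype.card W := rank_le_card_height Q
    _ = #W := Fintype.card_coe W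

section Twins

variable {V : Type*} (E : Finset (V × V))

def Dominates (i i' : V) : Prop :=
  ∀ j, ((i, j) ∈ E → (i', j) ∈ E) ∧ ((j, i) ∈ E → (j, i') ∈ E)

def IsTwin (i i' : V) : Prop := Dominates E i i' ∧ Dominates E i' i

def StrictlyDominates (i i' : V) : Prop := Dominates E i i' ∧ ¬Dominates E i' i

variable {E}

theorem Dominates.refl (i : V) : Dominates E i i := fun _ => ⟨id, id⟩

theorem Dominates.trans {a b c : V} (hab : Dominates E a b) (hbc : Dominates E b c) :
    Dominates E a c :=
  fun j => ⟨fun h => (hbc j).1 ((hab j).1 h), fun h => (hbc j).2 ((hab j).2 h)⟩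

theorem IsTwin.refl (i : V) : IsTwin E i i := ⟨.refl i, .refl i⟩

theorem IsTwin.symm {i i' : V} (h : IsTwin E i i') : IsTwin E i' i := ⟨h.2, h.1⟩

theorem IsTwin.mem_iff {a a' b b' : V} (ha : IsTwin E a a') (hb : IsTwin E b b') :
    (a, b) ∈ E ↔ (a', b') ∈ E :=
  ⟨fun h => (hb.1 a').2 ((ha.1 b).1 h), fun h => (hb.2 a).2 ((ha.2 b').1 h)⟩

theorem StrictlyDominates.of_isTwin {i x y : V} (hx : StrictlyDominates E i x)
    (hxy : IsTwin E x y) : StrictlyDominates E i y :=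
  ⟨hx.1.trans hxy.1, fun h => hx.2 (hxy.1.trans h)⟩

variable (E) in
def twinSetoid : Setoid V where
  r := IsTwin E
  iseqv := ⟨IsTwin.refl, IsTwin.symm, fun h h' => ⟨h.1.trans h'.1, h'.2.trans h.2⟩⟩

theorem twinSetoid_mk_eq_mk {i i' : V} :
    (⟦i⟧ : Quotient (twinSetoid E)) = ⟦i'⟧ ↔ IsTwin E i i' :=
  Quotient.eq

variable [Fintype V] [DecidableEq V]

instance : DecidableRel (Dominates E) := fun _ _ => Fintype.decidableForallFintype

instance : DecidableRel (IsTwin E) := fun _ _ => instDecidableAnd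

instance : DecidableRel (StrictlyDominates E) := fun _ _ => instDecidableAnd

instance : DecidableEq (Quotient (twinSetoid E)) :=
  @Quotient.decidableEq _ (twinSetoid E) (inferInstanceAs (DecidableRel (IsTwin E)))

instance : Fintype (Quotient (twinSetoid E)) :=
  @Quotient.fintype _ _ (twinSetoid E) (inferInstanceAs (DecidableRel (IsTwin E)))

theorem card_twinSetoid_fiber (i : V) :
    Nat.card {x // (⟦x⟧ : Quotient (twinSetoid E)) = ⟦i⟧} = #{x | IsTwin E i x} := by
  rw [Nat.card_eq_fintype_card, Fintype.card_subtype]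
  congr 1
  ext x
  simp only [mem_filter, mem_univ, true_and, twinSetoid_mk_eq_mk]
  exact ⟨IsTwin.symm, IsTwin.symm⟩

theorem card_dominates_eq_add (i : V) :
    #{x | Dominates E i x} = #{x | IsTwin E i x} + #{x | StrictlyDominates E i x} := by
  rw [← card_filter_add_card_filter_not (p := fun x => Dominates E x i), filter_filter,
    filter_filter]
  rfl

theorem StrictlyDominates.card_dominates_lt {i x : V} (hx : StrictlyDominates E i x) :
    #{y | Dominates E x y} < #{y | Dominates E i y} := by
  refine card_lt_card ⟨fun y hy => ?_, fun hsub => ?_⟩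
  · simp only [mem_filter, mem_univ, true_and] at hy ⊢
    exact hx.1.trans hy
  · have : i ∈ ({y | Dominates E i y} : Finset V) := by simp [Dominates.refl]
    exact hx.2 (by simpa using hsub this)

theorem card_strictlyDominates_fiber (i x : V) :
    #{y ∈ ({y | StrictlyDominates E i y} : Finset V) | (⟦y⟧ : Quotient (twinSetoid E)) = ⟦x⟧} =
      if StrictlyDominates E i x then #{y | IsTwin E x y} else 0 := by
  split_ifs with hx
  · congr 1
    ext y
    simp only [mem_filter, mem_univ, true_and, twinSetoid_mk_eq_mk]
    exact ⟨fun h => h.2.symm, fun h => ⟨hx.of_isTwin h, h.symm⟩⟩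
  · rw [card_eq_zero, filter_eq_empty_iff]
    intro y hy hyx
    simp only [mem_filter, mem_univ, true_and] at hy
    exact hx (hy.of_isTwin (twinSetoid_mk_eq_mk.mp hyx))

end Twins

section PatternConj

variable {V F : Type*} [Field F]

-- Since `(A * single i j 1 * B) k l = A k i * B j l`, this says that `X ↦ A * X * B` sends
-- the matrix units of the arcs of `E₁` into matrices supported on `E₂`.
def SandwichMaps (A B : Matrix V V F) (E₁ E₂ : Finset (V × V)) : Prop :=
  ∀ ⦃i j k l⦄, (i, j) ∈ E₁ → A k i ≠ 0 → B j l ≠ 0 → (k, l) ∈ E₂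

def Coupled (A B : Matrix V V F) (i k : V) : Prop := A k i ≠ 0 ∧ B i k ≠ 0

variable {A B : Matrix V V F} {E₁ E₂ : Finset (V × V)}

theorem Coupled.symm {i k : V} (h : Coupled A B i k) : Coupled B A k i := ⟨h.2, h.1⟩

variable [Fintype V] [DecidableEq V]

structure PatternConj (A B : Matrix V V F) (E₁ E₂ : Finset (V × V)) : Prop where
  mul_eq_one : A * B = 1
  mul_eq_one' : B * A = 1
  maps : SandwichMaps A B E₁ E₂
  maps' : SandwichMaps B A E₂ E₁

theorem PatternConj.symm (h : PatternConj A B E₁ E₂) : PatternConj B A E₂ E₁ :=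
  ⟨h.mul_eq_one', h.mul_eq_one, h.maps', h.maps⟩

theorem Coupled.mem_iff (h : PatternConj A B E₁ E₂) {i j k l : V} (hik : Coupled A B i k)
    (hjl : Coupled A B j l) : (i, j) ∈ E₁ ↔ (k, l) ∈ E₂ :=
  ⟨fun hij => h.maps hij hik.1 hjl.2, fun hkl => h.maps' hkl hik.2 hjl.1⟩

theorem exists_coupled (hBA : B * A = 1) (i : V) : ∃ k, Coupled A B i k := by
  have : ∑ k, B i k * A k i ≠ 0 := by
    rw [← mul_apply, hBA, one_apply_eq]
    exact one_ne_zero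
  obtain ⟨k, -, hk⟩ := exists_ne_zero_of_sum_ne_zero this
  exact ⟨k, right_ne_zero_of_mul hk, left_ne_zero_of_mul hk⟩

-- Stated with two dominators `i'`, `i''` and only half of a coupling at each, as the rank bound
-- in `PatternConj.card_dominates_le` requires.
theorem PatternConj.dominates {i k i' i'' k' : V} (h : PatternConj A B E₁ E₂)
    (hik : Coupled A B i k) (hi' : Dominates E₁ i i') (hi'' : Dominates E₁ i i'')
    (hb : B i' k' ≠ 0) (ha : A k' i'' ≠ 0) : Dominates E₂ k k' := by
  intro l
  obtain ⟨j, hlj⟩ := exists_coupled h.mul_eq_one l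
  refine ⟨fun hkl => ?_, fun hlk => ?_⟩
  · exact h.maps ((hi'' j).1 (h.maps' hkl hik.2 hlj.2)) ha hlj.1
  · exact h.maps ((hi' j).2 (h.maps' hlk hlj.1 hik.1)) hlj.2 hb

theorem Coupled.dominates_iff (h : PatternConj A B E₁ E₂) {i k x y : V}
    (hik : Coupled A B i k) (hxy : Coupled A B x y) :
    Dominates E₁ i x ↔ Dominates E₂ k y :=
  ⟨fun hix => h.dominates hik hix hix hxy.2 hxy.1,
    fun hky => h.symm.dominates hik.symm hky hky hxy.1 hxy.2⟩

theorem Coupled.isTwin_iff (h : PatternConj A B E₁ E₂) {i k x y : V}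
    (hik : Coupled A B i k) (hxy : Coupled A B x y) : IsTwin E₁ i x ↔ IsTwin E₂ k y :=
  and_congr (hik.dominates_iff h hxy) (hxy.dominates_iff h hik)

theorem Coupled.strictlyDominates_iff (h : PatternConj A B E₁ E₂) {i k x y : V}
    (hik : Coupled A B i k) (hxy : Coupled A B x y) :
    StrictlyDominates E₁ i x ↔ StrictlyDominates E₂ k y :=
  and_congr (hik.dominates_iff h hxy) (not_congr (hxy.dominates_iff h hik))

theorem PatternConj.card_dominates_le (h : PatternConj A B E₁ E₂) {i k : V}
    (hik : Coupled A B i k) : #{x | Dominates E₁ i x} ≤ #{y | Dominates E₂ k y} :=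
  card_le_card_of_mul_eq_one h.mul_eq_one' fun x hx x' hx' y hb ha => by
    simp only [mem_filter, mem_univ, true_and] at hx hx' ⊢
    exact h.dominates hik hx hx' hb ha

theorem PatternConj.card_dominates_eq (h : PatternConj A B E₁ E₂) {i k : V}
    (hik : Coupled A B i k) : #{x | Dominates E₁ i x} = #{y | Dominates E₂ k y} :=
  (h.card_dominates_le hik).antisymm (h.symm.card_dominates_le hik.symm)

end PatternConj

section TwinClasses

variable {V F : Type*} [Fintype V] [DecidableEq V] [Field F]
  {A B : Matrix V V F} {E₁ E₂ : Finset (V × V)}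

noncomputable def PatternConj.twinClassMap (h : PatternConj A B E₁ E₂) :
    Quotient (twinSetoid E₁) → Quotient (twinSetoid E₂) :=
  Quotient.map (fun i => (exists_coupled h.mul_eq_one' i).choose) fun i i' hii' =>
    ((exists_coupled h.mul_eq_one' i).choose_spec.isTwin_iff h
      (exists_coupled h.mul_eq_one' i').choose_spec).1 hii'

theorem PatternConj.twinClassMap_mk (h : PatternConj A B E₁ E₂) {i k : V}
    (hik : Coupled A B i k) : h.twinClassMap ⟦i⟧ = ⟦k⟧ :=
  Quotient.sound <|
    ((exists_coupled h.mul_eq_one' i).choose_spec.isTwin_iff h hik).1 (IsTwin.refl i)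

noncomputable def PatternConj.twinClassEquiv (h : PatternConj A B E₁ E₂) :
    Quotient (twinSetoid E₁) ≃ Quotient (twinSetoid E₂) where
  toFun := h.twinClassMap
  invFun := h.symm.twinClassMap
  left_inv := by
    rintro ⟨i⟩
    obtain ⟨k, hik⟩ := exists_coupled h.mul_eq_one' i
    exact (congrArg _ (h.twinClassMap_mk hik)).trans (h.symm.twinClassMap_mk hik.symm)
  right_inv := by
    rintro ⟨k⟩
    obtain ⟨i, hki⟩ := exists_coupled h.mul_eq_one k
    exact (congrArg _ (h.symm.twinClassMap_mk hki)).trans (h.twinClassMap_mk hki.symm)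

theorem PatternConj.twinClassEquiv_mk (h : PatternConj A B E₁ E₂) {i k : V}
    (hik : Coupled A B i k) : h.twinClassEquiv ⟦i⟧ = ⟦k⟧ :=
  h.twinClassMap_mk hik

theorem PatternConj.card_isTwin_eq (h : PatternConj A B E₁ E₂) {i k : V}
    (hik : Coupled A B i k) : #{x | IsTwin E₁ i x} = #{y | IsTwin E₂ k y} := by
  induction hN : #{x | Dominates E₁ i x} using Nat.strong_induction_on generalizing i k with
  | _ N ih =>
    suffices #{x | StrictlyDominates E₁ i x} = #{y | StrictlyDominates E₂ k y} by
      have := h.card_dominates_eq hik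
      rw [card_dominates_eq_add, card_dominates_eq_add] at this
      omega
    rw [card_eq_sum_card_fiberwise (f := Quotient.mk (twinSetoid E₁)) (t := univ)
        fun _ _ => mem_univ _,
      card_eq_sum_card_fiberwise (f := Quotient.mk (twinSetoid E₂)) (t := univ)
        fun _ _ => mem_univ _]
    refine Fintype.sum_equiv h.twinClassEquiv _ _ (Quotient.ind fun x => ?_)
    obtain ⟨y, hxy⟩ := exists_coupled h.mul_eq_one' x
    rw [h.twinClassEquiv_mk hxy, card_strictlyDominates_fiber, card_strictlyDominates_fiber]
    by_cases hx : StrictlyDominates E₁ i x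
    · rw [if_pos hx, if_pos ((hik.strictlyDominates_iff h hxy).1 hx)]
      exact ih _ (hN ▸ hx.card_dominates_lt) hxy rfl
    · rw [if_neg hx, if_neg (mt (hik.strictlyDominates_iff h hxy).2 hx)]

theorem PatternConj.exists_equiv (h : PatternConj A B E₁ E₂) :
    ∃ σ : V ≃ V, ∀ i j, (i, j) ∈ E₁ ↔ (σ i, σ j) ∈ E₂ := by
  obtain ⟨σ, hσ⟩ := Quotient.exists_equiv_mk_eq h.twinClassEquiv fun i => by
    obtain ⟨k, hik⟩ := exists_coupled h.mul_eq_one' i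
    rw [h.twinClassEquiv_mk hik, card_twinSetoid_fiber, card_twinSetoid_fiber]
    exact h.card_isTwin_eq hik
  have isTwin_σ : ∀ {i k}, Coupled A B i k → IsTwin E₂ k (σ i) := fun hik =>
    twinSetoid_mk_eq_mk.1 ((h.twinClassEquiv_mk hik).symm.trans (hσ _).symm)
  refine ⟨σ, fun i j => ?_⟩
  obtain ⟨k, hik⟩ := exists_coupled h.mul_eq_one' i
  obtain ⟨l, hjl⟩ := exists_coupled h.mul_eq_one' j
  exact (hik.mem_iff h hjl).trans ((isTwin_σ hik).mem_iff (isTwin_σ hjl))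

end TwinClasses

section GraphSpace

variable {F : Type*} [Field F] {n : ℕ}

theorem apply_eq_zero_of_mem_graphSpace_s16 {E : Finset (Fin n × Fin n)}
    {X : Matrix (Fin n) (Fin n) F} (hX : X ∈ graphSpace F E) {k l : Fin n} (hkl : (k, l) ∉ E) :
    X k l = 0 := by
  induction hX using Submodule.span_induction with
  | mem x hx =>
    obtain ⟨⟨i, j⟩, hij, rfl⟩ := hx
    simp only [single_apply, ite_eq_right_iff, and_imp]
    rintro rfl rfl
    exact (hkl hij).elim
  | zero => rfl
  | add x y _ _ hx hy => rw [Matrix.add_apply, hx, hy, add_zero]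
  | smul a x _ hx => rw [Matrix.smul_apply, hx, smul_zero]

theorem single_mem_graphSpace {E : Finset (Fin n × Fin n)} {i j : Fin n} (hij : (i, j) ∈ E) :
    single i j (1 : F) ∈ graphSpace F E :=
  Submodule.subset_span ⟨(i, j), hij, rfl⟩

theorem mul_single_one_mul_apply (A B : Matrix (Fin n) (Fin n) F) (i j k l : Fin n) :
    (A * single i j (1 : F) * B) k l = A k i * B j l := by
  simp [mul_apply, single_apply, ite_and]

theorem sandwichMaps_of_mul_mem_graphSpace {A B : Matrix (Fin n) (Fin n) F}
    {E₁ E₂ : Finset (Fin n × Fin n)}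
    (h : ∀ X ∈ graphSpace F E₁, A * X * B ∈ graphSpace F E₂) : SandwichMaps A B E₁ E₂ := by
  intro i j k l hij hki hjl
  by_contra hkl
  have := apply_eq_zero_of_mem_graphSpace_s16 (h _ (single_mem_graphSpace hij)) hkl
  rw [mul_single_one_mul_apply] at this
  exact mul_ne_zero hki hjl this

theorem patternConj_of_conj_mem_graphSpace_iff {T : Matrix (Fin n) (Fin n) F}
    (hT : IsUnit T.det) {E₁ E₂ : Finset (Fin n × Fin n)}
    (hconj : ∀ X, X ∈ graphSpace F E₁ ↔ T * X * T⁻¹ ∈ graphSpace F E₂) :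
    PatternConj T T⁻¹ E₁ E₂ where
  mul_eq_one := mul_nonsing_inv T hT
  mul_eq_one' := nonsing_inv_mul T hT
  maps := sandwichMaps_of_mul_mem_graphSpace fun X hX => (hconj X).1 hX
  maps' := sandwichMaps_of_mul_mem_graphSpace fun X hX => (hconj _).2 <| by
    rwa [← mul_assoc, ← mul_assoc, mul_nonsing_inv T hT, one_mul, mul_assoc,
      mul_nonsing_inv T hT, mul_one]

end GraphSpace

/-- If `S_G` and `S_H` are conjugate — i.e. `T S_G T⁻¹ = S_H` for some invertible `T` —
then the directed graphs `G` and `H` are isomorphic. -/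
theorem stmt_16 (F : Type*) [Field F] (n : ℕ)
    (E E' : Finset (Fin n × Fin n)) (T : Matrix (Fin n) (Fin n) F)
    (hT : IsUnit T)
    (hconj : ∀ B : Matrix (Fin n) (Fin n) F,
      B ∈ graphSpace F E ↔ T * B * T⁻¹ ∈ graphSpace F E') :
    ∃ σ : Equiv.Perm (Fin n), ∀ i j : Fin n, (i, j) ∈ E ↔ (σ i, σ j) ∈ E' :=
  (patternConj_of_conj_mem_graphSpace_iff ((isUnit_iff_isUnit_det T).mp hT) hconj).exists_equiv
end
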